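/- arXiv:2402.02976 — 3 statements merged into one kernel-verified Lean document; each statement's English description precedes it below -/
import Mathlib

section
/- For any real numbers γ, ε with 0 < γ < 1 and any weighted error r satisfying 0 ≤ r ≤ 1/2 − γ/2, if α = (1/2)·ln((1/2 + γ/2)/(1/2 − γ/2)), then r·exp(α) + (1 − r)·exp(−α) ≤ sqrt(1 − γ²). -/
open Real

lemma mul_exp_add_one_sub_mul_exp_neg_le_of_le {α r s : ℝ} (hα : 0 ≤ α) (hrs : r ≤ s) :
    r * exp α + (1 - r) * exp (-α) ≤ s * exp α + (1 - s) * exp (-α) := by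
  have hexp : exp (-α) ≤ exp α := exp_le_exp.mpr (by linarith)
  linarith [mul_nonneg (sub_nonneg.mpr hrs) (sub_nonneg.mpr hexp)]

lemma exp_log_div_two {x : ℝ} (hx : 0 < x) : exp (log x / 2) = √x := by
  rw [← log_sqrt hx.le, exp_log (sqrt_pos.mpr hx)]

lemma mul_sqrt_div_self {a b : ℝ} (hb : 0 < b) : b * √(a / b) = √(a * b) := by
  rw [← sqrt_sq hb.le, ← sqrt_mul (sq_nonneg b), sqrt_sq hb.le]
  congr 1
  field_simp

/-- This choice of `α` balances the two terms: each equals `√(a b)`. -/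
lemma mul_exp_half_log_div_add {a b : ℝ} (ha : 0 < a) (hb : 0 < b) :
    b * exp (log (a / b) / 2) + a * exp (-(log (a / b) / 2)) = 2 * √(a * b) := by
  rw [← neg_div, ← log_inv, inv_div, exp_log_div_two (div_pos ha hb),
    exp_log_div_two (div_pos hb ha), mul_sqrt_div_self hb, mul_sqrt_div_self ha, mul_comm b a]
  ring

theorem stmt1_general (γ r : ℝ) (hγ0 : 0 < γ) (hγ1 : γ < 1)
    (hr1 : r ≤ 1/2 - γ/2)
    (α : ℝ) (hα : α = (1/2) * Real.log ((1/2 + γ/2) / (1/2 - γ/2))) :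
    r * Real.exp α + (1 - r) * Real.exp (-α) ≤ Real.sqrt (1 - γ^2) := by
  set p : ℝ := 1/2 + γ/2 with hp_def
  set q : ℝ := 1/2 - γ/2 with hq_def
  have hp : 0 < p := by positivity
  have hq : 0 < q := by linarith
  have hα' : α = log (p / q) / 2 := by rw [hα]; ring
  have hα0 : 0 ≤ α := by
    rw [hα']
    exact div_nonneg (log_nonneg ((one_le_div hq).mpr (by linarith))) zero_le_two
  calc r * exp α + (1 - r) * exp (-α)
      ≤ q * exp α + (1 - q) * exp (-α) := mul_exp_add_one_sub_mul_exp_neg_le_of_le hα0 hr1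
    _ = 2 * √(p * q) := by
      rw [show 1 - q = p by ring, hα']
      exact mul_exp_half_log_div_add hp hq
    _ = √(1 - γ ^ 2) := by
      rw [show 1 - γ ^ 2 = 2 ^ 2 * (p * q) by ring, sqrt_mul (sq_nonneg (2 : ℝ)), sqrt_sq zero_le_two]

theorem stmt1 (γ ε r : ℝ) (hγ0 : 0 < γ) (hγ1 : γ < 1)
    (hr0 : 0 ≤ r) (hr1 : r ≤ 1/2 - γ/2)
    (α : ℝ) (hα : α = (1/2) * Real.log ((1/2 + γ/2) / (1/2 - γ/2))) :
    r * Real.exp α + (1 - r) * Real.exp (-α) ≤ Real.sqrt (1 - γ^2) :=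
  stmt1_general γ r hγ0 hγ1 hr1 α hα
end

section
/- Let 0 < γ ≤ 1/2 and K be a positive real number. If the number of 'bad' rounds B satisfies B ≤ γ²K/16, then (1 − γ²)^{(K − B)/2} · (1 + 4γ)^{B/2} ≤ exp(−γ²K/4). -/
theorem stmt3 (γ K B : ℝ) (hγ0 : 0 < γ) (hγ1 : γ ≤ 1/2) (hK : 0 < K)
    (hB0 : 0 ≤ B) (hB : B ≤ γ^2 * K / 16) :
    (1 - γ^2) ^ ((K - B)/2) * (1 + 4*γ) ^ (B/2) ≤ Real.exp (-γ^2 * K / 4) := by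
  have h1 : (0:ℝ) < 1 - γ^2 := by nlinarith
  have h2 : (0:ℝ) < 1 + 4*γ := by nlinarith
  have l1 : Real.log (1 - γ^2) ≤ -γ^2 := by
    have := Real.log_le_sub_one_of_pos h1; linarith
  have l2 : Real.log (1 + 4*γ) ≤ 4*γ := by
    have := Real.log_le_sub_one_of_pos h2; linarith
  have hKB : 0 ≤ K - B := by nlinarith
  rw [Real.rpow_def_of_pos h1, Real.rpow_def_of_pos h2, ← Real.exp_add,
    Real.exp_le_exp]
  nlinarith [mul_le_mul_of_nonneg_right l1 (by linarith : (0:ℝ) ≤ (K - B)/2),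
    mul_le_mul_of_nonneg_right l2 (by linarith : (0:ℝ) ≤ B/2),
    mul_le_mul_of_nonneg_left hB (by positivity : (0:ℝ) ≤ γ),
    sq_nonneg γ, mul_pos hγ0 hK]
end

section
/- Let n, K be positive integers, h : Fin K → Fin n → {−1,1}, y : Fin n → {−1,1}, α > 0, and suppose ∏_{k=1}^K Z_k ≤ ε/n where Z_k are the AdaBoost normalization factors (defined recursively from D₁ uniform as in the weight-update rule with step size α). Then for every i, sign(∑_{k=1}^K h_k(i)) = y_i, provided ε < 1. -/
/-!
After `m` rounds the weight update telescopes to `D m i * ∏ Z k = D 0 i * ∏ w k i`, and since the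
weights stay a probability vector, `D m i ≤ 1`. With `D 0 i = 1/n` and
`w k i = exp (-α y_i h_k(i))` this gives `exp (-α y_i ∑ h_k(i)) ≤ n ∏ Z k ≤ ε < 1`, so `y_i` and the
vote `∑ h_k(i)` have the same sign.
-/

open Finset Real

section MultiplicativeWeights

variable {ι : Type*} {D : ℕ → ι → ℝ} {Z : ℕ → ℝ} {w : ℕ → ι → ℝ}

theorem normalizer_pos [Fintype ι] [Nonempty ι] (hZ : ∀ k, Z k = ∑ i, D k i * w k i)
    (hw : ∀ k i, 0 < w k i) {k : ℕ} (hDk : ∀ i, 0 < D k i) : 0 < Z k := by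
  rw [hZ]
  exact sum_pos (fun i _ => mul_pos (hDk i) (hw k i)) univ_nonempty

theorem weight_pos [Fintype ι] [Nonempty ι] (hZ : ∀ k, Z k = ∑ i, D k i * w k i)
    (hD : ∀ k i, D (k + 1) i = D k i * w k i / Z k) (hw : ∀ k i, 0 < w k i)
    (hD0 : ∀ i, 0 < D 0 i) : ∀ m i, 0 < D m i
  | 0 => hD0
  | m + 1 => fun i => by
    have ih := weight_pos hZ hD hw hD0 m
    rw [hD]
    exact div_pos (mul_pos (ih i) (hw m i)) (normalizer_pos hZ hw ih)

theorem sum_weight_eq_one [Fintype ι] (hZ : ∀ k, Z k = ∑ i, D k i * w k i)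
    (hD : ∀ k i, D (k + 1) i = D k i * w k i / Z k) (hZ0 : ∀ k, Z k ≠ 0)
    (hD0 : ∑ i, D 0 i = 1) : ∀ m, ∑ i, D m i = 1
  | 0 => hD0
  | m + 1 => by simp_rw [hD, ← sum_div, ← hZ, div_self (hZ0 m)]

theorem weight_mul_prod_normalizer (hD : ∀ k i, D (k + 1) i = D k i * w k i / Z k)
    (hZ0 : ∀ k, Z k ≠ 0) (i : ι) :
    ∀ m, D m i * ∏ k ∈ range m, Z k = D 0 i * ∏ k ∈ range m, w k i
  | 0 => by simp
  | m + 1 => by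
    rw [prod_range_succ, prod_range_succ, hD, ← mul_assoc (D 0 i),
      ← weight_mul_prod_normalizer hD hZ0 i m]
    field_simp [hZ0 m]

theorem weight_mul_prod_le_prod_normalizer [Fintype ι] (hZ : ∀ k, Z k = ∑ i, D k i * w k i)
    (hD : ∀ k i, D (k + 1) i = D k i * w k i / Z k) (hw : ∀ k i, 0 < w k i)
    (hD0 : ∀ i, 0 < D 0 i) (hD0_sum : ∑ i, D 0 i = 1) (i : ι) (m : ℕ) :
    D 0 i * ∏ k ∈ range m, w k i ≤ ∏ k ∈ range m, Z k := by
  have : Nonempty ι := ⟨i⟩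
  have hDpos := weight_pos hZ hD hw hD0
  have hZpos k : 0 < Z k := normalizer_pos hZ hw (hDpos k)
  have hZ0 k : Z k ≠ 0 := (hZpos k).ne'
  have hDle : D m i ≤ 1 := sum_weight_eq_one hZ hD hZ0 hD0_sum m ▸
    single_le_sum (fun j _ => (hDpos m j).le) (mem_univ i)
  rw [← weight_mul_prod_normalizer hD hZ0 i m]
  exact mul_le_of_le_one_left (prod_nonneg fun k _ => (hZpos k).le) hDle

end MultiplicativeWeights

theorem Real.sign_eq_of_mul_pos {y x : ℝ} (hy : y = 1 ∨ y = -1) (hxy : 0 < y * x) :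
    Real.sign x = y := by
  rcases hy with rfl | rfl
  · exact Real.sign_of_pos (by linarith)
  · exact Real.sign_of_neg (by linarith)

theorem stmt18_general (n K : ℕ)
    (h : ℕ → Fin n → ℝ)
    (y : Fin n → ℝ) (hy : ∀ i, y i = 1 ∨ y i = -1)
    (α : ℝ) (hα : 0 < α)
    (D : ℕ → Fin n → ℝ) (Z : ℕ → ℝ)
    (hD0 : ∀ i, D 0 i = 1 / n)
    (hZ : ∀ k, Z k = ∑ i, D k i * Real.exp (-α * y i * h k i))
    (hD : ∀ k i, D (k+1) i = D k i * Real.exp (-α * y i * h k i) / Z k)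
    (ε : ℝ) (hε : ε < 1)
    (hprod : ∏ k ∈ Finset.range K, Z k ≤ ε / n) :
    ∀ i, Real.sign (∑ k ∈ Finset.range K, h k i) = y i := by
  intro i
  have hn : (0 : ℝ) < n := Nat.cast_pos.mpr i.pos
  have hD0_sum : ∑ j, D 0 j = 1 := by simp [hD0, hn.ne']
  have hbound := (weight_mul_prod_le_prod_normalizer hZ hD (fun _ _ => exp_pos _)
    (fun j => by rw [hD0]; positivity) hD0_sum i K).trans hprod
  rw [hD0, ← exp_sum, ← mul_sum, one_div_mul_eq_div, div_le_div_iff_of_pos_right hn] at hbound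
  have hvote : -α * y i * ∑ k ∈ range K, h k i < 0 := Real.exp_lt_one_iff.mp (hbound.trans_lt hε)
  exact Real.sign_eq_of_mul_pos (hy i) (by nlinarith)

theorem stmt18 (n K : ℕ) (hn : 0 < n) (hK : 0 < K)
    (h : ℕ → Fin n → ℝ) (hh : ∀ k i, h k i = 1 ∨ h k i = -1)
    (y : Fin n → ℝ) (hy : ∀ i, y i = 1 ∨ y i = -1)
    (α : ℝ) (hα : 0 < α)
    (D : ℕ → Fin n → ℝ) (Z : ℕ → ℝ)
    (hD0 : ∀ i, D 0 i = 1 / n)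
    (hZ : ∀ k, Z k = ∑ i, D k i * Real.exp (-α * y i * h k i))
    (hD : ∀ k i, D (k+1) i = D k i * Real.exp (-α * y i * h k i) / Z k)
    (ε : ℝ) (hε : ε < 1)
    (hprod : ∏ k ∈ Finset.range K, Z k ≤ ε / n) :
    ∀ i, Real.sign (∑ k ∈ Finset.range K, h k i) = y i :=
  stmt18_general n K h y hy α hα D Z hD0 hZ hD ε hε hprod
end
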